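/- Let 1 → G → Γ → Π → 1 be an extension of groups with section s : Π → Γ of σ (s(1) = 1), and f, Ψ, h as associated to s. Then: (1) f(σ(γ₁), σ(γ₂)) = Ψ(σ(γ₁))(h(γ₂)⁻¹)·h(γ₁)⁻¹·h(γ₁γ₂) for all γ₁, γ₂ ∈ Γ; (2) for every homogeneous bounded 2-cocycle c on G, setting T_c(γ₁,γ₂) := c(f(σ(γ₁)), σ(γ₂)), h(γ₁γ₂)⁻¹) − c(Ψ(σ(γ₁))(h(γ₂)⁻¹), h(γ₁)⁻¹) and e_c(α,β,γ) := c(Ψ(α)(f(β,γ)), f(α,βγ)) − c(f(α,β), f(αβ,γ)) for α,β,γ ∈ Π, one has for all γ₁, γ₂, γ₃ ∈ Γ: e_c(σ(γ₁), σ(γ₂), σ(γ₃)) = T_{c'}(γ₂,γ₃) − T_c(γ₁γ₂,γ₃) + T_c(γ₁,γ₂γ₃) − T_c(γ₁,γ₂), where c'(g,h) := c(Ψ(σ(γ₁))(g), Ψ(σ(γ₁))(h)). (This expresses that the pullback σ*(θ̄_{Ψ,f}) of the class [θ] is the coboundary of the bounded cochain T̄, so σ_b([θ]) = 0 in H_b³(Γ,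 H̄₂^{ℓ¹}(G,ℝ)).) -/

import Mathlib

/-!
Part (1) is a direct computation in `Γ`, pulled back to `G` along the injective inclusion.

For part (2), write `F = f(σγ₁, σγ₂)`, `r = Ψ(σ(γ₁γ₂))(h(γ₃)⁻¹)`, and so on. The non-abelian cocycle
identities of `(Ψ, f)` say that the arguments of all the terms of `e_c` and `T_c` satisfy four
product relations. Six instances of the cocycle identity of `c`, together with the single
invariance `c(F r F⁻¹, F) = c(F, r)`, then give the claimed equality. This invariance is where
homogeneity and boundedness come in. In the central extension `G ×_c ℝ` it says that the lift
`g ↦ (g, 0)` commutes with conjugation. The defect `t` of `(a,0)(b,0)(a,0)⁻¹` from `(aba⁻¹, 0)`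
grows like `n t` under `b ↦ bⁿ`, because lifts of powers are powers of lifts. The defect is also
bounded, since it is a sum of three values of `c`, so it vanishes.
-/

/-- The cochain `T_c(γ₁,γ₂) = c(f(σγ₁,σγ₂), h(γ₁γ₂)⁻¹) − c(Ψ(σγ₁)(h(γ₂)⁻¹), h(γ₁)⁻¹)`
associated to an extension `1 → G → Γ → Π → 1` with section data `(f, Ψ, h)` and a real
2-cochain `c` on `G`. -/
def Tcochain {G Γ P : Type*} [Group G] [Group Γ] [Group P]
    (σ : Γ →* P) (f : P → P → G) (Ψ : P → G → G) (h : Γ → G)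
    (c : G → G → ℝ) (γ₁ γ₂ : Γ) : ℝ :=
  c (f (σ γ₁) (σ γ₂)) ((h (γ₁ * γ₂))⁻¹) - c (Ψ (σ γ₁) ((h γ₂)⁻¹)) ((h γ₁)⁻¹)

/-- The composition cochain `e_c(α,β,γ) = c(Ψ(α)(f(β,γ)), f(α,βγ)) − c(f(α,β), f(αβ,γ))`. -/
def eCochain {G P : Type*} [Group G] [Group P] (Ψ : P → G → G) (f : P → P → G)
    (c : G → G → ℝ) (α β γ : P) : ℝ :=
  c (Ψ α (f β γ)) (f α (β * γ)) - c (f α β) (f (α * β) γ)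

section

variable {G : Type*} [Group G]

variable (G) in
structure NormalizedCocycle where
  toFun : G → G → ℝ
  cocycle : ∀ g g' g'' : G,
    toFun g' g'' - toFun (g * g') g'' + toFun g (g' * g'') - toFun g g' = 0
  map_one_right : ∀ g : G, toFun g 1 = 0
  map_one_left : ∀ g : G, toFun 1 g = 0

instance : CoeFun (NormalizedCocycle G) fun _ => G → G → ℝ := ⟨NormalizedCocycle.toFun⟩

@[ext]
structure CocycleExt (c : NormalizedCocycle G) where
  fst : G
  snd : ℝ

namespace CocycleExt

variable {c : NormalizedCocycle G}

instance : Group (CocycleExt c) where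
  mul a b := ⟨a.fst * b.fst, a.snd + b.snd + c a.fst b.fst⟩
  one := ⟨1, 0⟩
  inv a := ⟨a.fst⁻¹, -a.snd - c a.fst⁻¹ a.fst⟩
  mul_assoc a b d := by
    have := c.cocycle a.fst b.fst d.fst
    ext
    · exact mul_assoc a.fst b.fst d.fst
    · change a.snd + b.snd + c a.fst b.fst + d.snd + c (a.fst * b.fst) d.fst =
        a.snd + (b.snd + d.snd + c b.fst d.fst) + c a.fst (b.fst * d.fst)
      linarith
  one_mul a := by
    ext
    · exact one_mul a.fst
    · change 0 + a.snd + c 1 a.fst = a.snd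
      rw [c.map_one_left]; ring
  mul_one a := by
    ext
    · exact mul_one a.fst
    · change a.snd + 0 + c a.fst 1 = a.snd
      rw [c.map_one_right]; ring
  inv_mul_cancel a := by
    ext
    · exact inv_mul_cancel a.fst
    · change -a.snd - c a.fst⁻¹ a.fst + a.snd + c a.fst⁻¹ a.fst = 0
      ring

theorem mk_mul_mk (a b : G) (s t : ℝ) :
    (⟨a, s⟩ * ⟨b, t⟩ : CocycleExt c) = ⟨a * b, s + t + c a b⟩ := rfl

theorem mk_inv (a : G) (s : ℝ) : (⟨a, s⟩ : CocycleExt c)⁻¹ = ⟨a⁻¹, -s - c a⁻¹ a⟩ := rfl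

theorem one_def : (1 : CocycleExt c) = ⟨1, 0⟩ := rfl

theorem mk_pow {g : G} (hg : ∀ n : ℕ, c (g ^ n) g = 0) (t : ℝ) (n : ℕ) :
    (⟨g, t⟩ : CocycleExt c) ^ n = ⟨g ^ n, n * t⟩ := by
  induction n with
  | zero => simp [one_def]
  | succ n ih =>
    rw [pow_succ, ih, mk_mul_mk, hg, ← pow_succ]
    push_cast
    ring_nf

end CocycleExt

theorem eq_zero_of_forall_abs_natCast_mul_le {K : Type*} [Field K] [LinearOrder K]
    [IsStrictOrderedRing K] [Archimedean K] {t k : K} (h : ∀ n : ℕ, |n * t| ≤ k) : t = 0 := by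
  by_contra ht
  have ht : 0 < |t| := abs_pos.mpr ht
  obtain ⟨n, hn⟩ := exists_nat_gt (k / |t|)
  have := h n
  rw [abs_mul, Nat.abs_cast] at this
  linarith [(div_lt_iff₀ ht).mp hn]

theorem NormalizedCocycle.apply_mul_mul_inv_self (c : NormalizedCocycle G)
    (hhom : ∀ (g : G) (n m : ℕ), c (g ^ n) (g ^ m) = 0) (hbdd : ∃ k : ℝ, ∀ g g' : G, |c g g'| ≤ k)
    (a b : G) : c (a * b * a⁻¹) a = c a b := by
  obtain ⟨k, hk⟩ := hbdd
  have hpow (g : G) (n : ℕ) : c (g ^ n) g = 0 := by simpa using hhom g n 1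
  let lift (g : G) : CocycleExt c := ⟨g, 0⟩
  set x := lift a * lift b * (lift a)⁻¹ with hx
  have hx_mk : x = ⟨a * b * a⁻¹, x.snd⟩ := rfl
  have hx_snd : x.snd = 0 := by
    refine eq_zero_of_forall_abs_natCast_mul_le (k := k + k + k) fun n => ?_
    have hx_pow : x ^ n = lift a * lift (b ^ n) * (lift a)⁻¹ := by
      rw [hx, conj_pow, CocycleExt.mk_pow (hpow b), mul_zero]
    rw [hx_mk, CocycleExt.mk_pow (hpow _)] at hx_pow
    have hsnd := congrArg CocycleExt.snd hx_pow
    simp only [lift, CocycleExt.mk_inv, CocycleExt.mk_mul_mk] at hsnd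
    rw [hsnd]
    calc _ = |c a (b ^ n) + -c a⁻¹ a + c (a * b ^ n) a⁻¹| := by ring_nf
      _ ≤ |c a (b ^ n)| + |-c a⁻¹ a| + |c (a * b ^ n) a⁻¹| := abs_add_three _ _ _
      _ ≤ k + k + k := by rw [abs_neg]; gcongr <;> apply hk
  have hconj := congrArg CocycleExt.snd
    (show x * lift a = lift a * lift b by rw [hx, inv_mul_cancel_right])
  rw [hx_mk, hx_snd] at hconj
  simpa [lift, CocycleExt.mk_mul_mk] using hconj

theorem cocycle_identity_of_apply_conj (c : G → G → ℝ)
    (hc : ∀ g g' g'' : G, c g' g'' - c (g * g') g'' + c g (g' * g'') - c g g' = 0)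
    (hconj : ∀ a b : G, c (a * b * a⁻¹) a = c a b) {A B D F H U W X n r : G}
    (hA : A * U = F * r * F⁻¹ * n) (hB : B * W = U * X) (hD : D * W = r * H)
    (hH : n * X = F * H) :
    c A B - c F D = (c A U - c (F * r * F⁻¹) n) - (c D W - c r H) + (c B W - c U X)
      - (c F H - c n X) := by
  have hAB : A * B = F * D := by
    rw [← mul_left_inj W, mul_assoc, hB, ← mul_assoc, hA, mul_assoc F D, hD, mul_assoc _ n, hH]
    group
  have h₁ := hc A B W
  have h₂ := hc F D W
  have h₃ := hc A U X
  have h₄ := hc F r H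
  have h₅ := hc (F * r * F⁻¹) n X
  have h₆ := hc (F * r * F⁻¹) F H
  rw [hAB, hB] at h₁
  rw [hD] at h₂
  rw [hA] at h₃
  rw [hH] at h₅
  rw [inv_mul_cancel_right] at h₆
  linarith [hconj F r]

end

section Extension

variable {G Γ P : Type*} [Group G] [Group Γ] {i : G →* Γ} {s : P → Γ}
  {f : P → P → G} {Ψ : P → G → G}

theorem kernelAction_map_mul (hi : Function.Injective i)
    (hΨ : ∀ (α : P) (g : G), i (Ψ α g) = s α * i g * (s α)⁻¹) (α : P) (g g' : G) :
    Ψ α (g * g') = Ψ α g * Ψ α g' := by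
  apply hi
  simp only [map_mul, hΨ]
  group

theorem kernelAction_comp [Group P] (hi : Function.Injective i)
    (hf : ∀ α β : P, i (f α β) = s α * s β * (s (α * β))⁻¹)
    (hΨ : ∀ (α : P) (g : G), i (Ψ α g) = s α * i g * (s α)⁻¹) (α β : P) (g : G) :
    Ψ α (Ψ β g) = f α β * Ψ (α * β) g * (f α β)⁻¹ := by
  apply hi
  simp only [map_mul, map_inv, hΨ, hf]
  group

theorem factorSet_map_eq [Group P] (hi : Function.Injective i) {σ : Γ →* P}
    (hf : ∀ α β : P, i (f α β) = s α * s β * (s (α * β))⁻¹)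
    (hΨ : ∀ (α : P) (g : G), i (Ψ α g) = s α * i g * (s α)⁻¹)
    {h : Γ → G} (hh : ∀ γ : Γ, γ = i (h γ) * s (σ γ)) (γ₁ γ₂ : Γ) :
    f (σ γ₁) (σ γ₂) = Ψ (σ γ₁) (h γ₂)⁻¹ * (h γ₁)⁻¹ * h (γ₁ * γ₂) := by
  have hs (γ : Γ) : s (σ γ) = (i (h γ))⁻¹ * γ := eq_inv_mul_of_mul_eq (hh γ).symm
  apply hi
  rw [hf, map_mul, map_mul, hΨ, map_inv, map_inv, ← map_mul σ, hs γ₁, hs γ₂, hs (γ₁ * γ₂)]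
  group

theorem eCochain_map_eq_coboundary_Tcochain [Group P] {σ : Γ →* P} {h : Γ → G} (c : G → G → ℝ)
    (hc : ∀ g g' g'' : G, c g' g'' - c (g * g') g'' + c g (g' * g'') - c g g' = 0)
    (hconj : ∀ a b : G, c (a * b * a⁻¹) a = c a b)
    (hΨ_mul : ∀ (α : P) (g g' : G), Ψ α (g * g') = Ψ α g * Ψ α g')
    (hΨ_comp : ∀ (α β : P) (g : G), Ψ α (Ψ β g) = f α β * Ψ (α * β) g * (f α β)⁻¹)
    (hfh : ∀ γ₁ γ₂ : Γ, f (σ γ₁) (σ γ₂) = Ψ (σ γ₁) (h γ₂)⁻¹ * (h γ₁)⁻¹ * h (γ₁ * γ₂))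
    (γ₁ γ₂ γ₃ : Γ) :
    eCochain Ψ f c (σ γ₁) (σ γ₂) (σ γ₃) =
      Tcochain σ f Ψ h (fun g g' => c (Ψ (σ γ₁) g) (Ψ (σ γ₁) g')) γ₂ γ₃
        - Tcochain σ f Ψ h c (γ₁ * γ₂) γ₃ + Tcochain σ f Ψ h c γ₁ (γ₂ * γ₃)
        - Tcochain σ f Ψ h c γ₁ γ₂ := by
  simp only [eCochain, Tcochain, hΨ_comp, ← map_mul σ, ← mul_assoc]
  refine cocycle_identity_of_apply_conj c hc hconj ?_ ?_ ?_ ?_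
  · rw [← hΨ_mul, hfh, mul_inv_cancel_right, hΨ_mul, hΨ_comp, map_mul]
  · rw [hfh, ← mul_assoc]
    group
  · rw [hfh]
    group
  · rw [hfh]
    group

end Extension

theorem stmt_19_general {G Γ P : Type*} [Group G] [Group Γ] [Group P]
    (i : G →* Γ) (σ : Γ →* P)
    (hi_inj : Function.Injective i)
    (s : P → Γ)
    (f : P → P → G) (hf : ∀ α β : P, i (f α β) = s α * s β * (s (α * β))⁻¹)
    (Ψ : P → G → G) (hΨ : ∀ (α : P) (g : G), i (Ψ α g) = s α * i g * (s α)⁻¹)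
    (h : Γ → G) (hh : ∀ γ : Γ, γ = i (h γ) * s (σ γ))
    (c : G → G → ℝ)
    (hc_bdd : ∃ k : ℝ, ∀ g g' : G, |c g g'| ≤ k)
    (hc_cocycle : ∀ g g' g'' : G,
      c g' g'' - c (g * g') g'' + c g (g' * g'') - c g g' = 0)
    (hc_norm : (∀ g : G, c g 1 = 0) ∧ (∀ g : G, c 1 g = 0))
    (hc_hom : ∀ (g : G) (n m : ℕ), c (g ^ n) (g ^ m) = 0) :
    -- (1)
    (∀ γ₁ γ₂ : Γ,
      f (σ γ₁) (σ γ₂) = Ψ (σ γ₁) ((h γ₂)⁻¹) * (h γ₁)⁻¹ * h (γ₁ * γ₂)) ∧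
    -- (2)
    (∀ γ₁ γ₂ γ₃ : Γ,
      eCochain Ψ f c (σ γ₁) (σ γ₂) (σ γ₃) =
        Tcochain σ f Ψ h (fun g g' => c (Ψ (σ γ₁) g) (Ψ (σ γ₁) g')) γ₂ γ₃
          - Tcochain σ f Ψ h c (γ₁ * γ₂) γ₃
          + Tcochain σ f Ψ h c γ₁ (γ₂ * γ₃)
          - Tcochain σ f Ψ h c γ₁ γ₂) := by
  let c' : NormalizedCocycle G := ⟨c, hc_cocycle, hc_norm.1, hc_norm.2⟩
  have hfh := factorSet_map_eq hi_inj hf hΨ hh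
  refine ⟨hfh, eCochain_map_eq_coboundary_Tcochain c hc_cocycle
    (c'.apply_mul_mul_inv_self hc_hom hc_bdd) (kernelAction_map_mul hi_inj hΨ)
    (kernelAction_comp hi_inj hf hΨ) hfh⟩

/-- for an extension `1 → G → Γ → Π → 1` with section `s` and associated data
`(f, Ψ, h)`: (1) the non-abelian cocycle `f ∘ (σ × σ)` is expressed via `Ψ` and `h`;
(2) for every homogeneous bounded 2-cocycle `c` on `G`, the pullback `σ*(e_c)` is the
coboundary of the bounded cochain `T` (so `σ_b([θ]) = 0`). -/
theorem stmt_19 {G Γ P : Type*} [Group G] [Group Γ] [Group P]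
    (i : G →* Γ) (σ : Γ →* P)
    (hi_inj : Function.Injective i)
    (hσ_surj : Function.Surjective σ)
    (hrange : ∀ γ : Γ, σ γ = 1 ↔ ∃ g : G, i g = γ)
    (s : P → Γ) (hs : ∀ α : P, σ (s α) = α) (hs1 : s 1 = 1)
    (f : P → P → G) (hf : ∀ α β : P, i (f α β) = s α * s β * (s (α * β))⁻¹)
    (Ψ : P → G → G) (hΨ : ∀ (α : P) (g : G), i (Ψ α g) = s α * i g * (s α)⁻¹)
    (h : Γ → G) (hh : ∀ γ : Γ, γ = i (h γ) * s (σ γ))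
    (c : G → G → ℝ)
    (hc_bdd : ∃ k : ℝ, ∀ g g' : G, |c g g'| ≤ k)
    (hc_cocycle : ∀ g g' g'' : G,
      c g' g'' - c (g * g') g'' + c g (g' * g'') - c g g' = 0)
    (hc_norm : (∀ g : G, c g 1 = 0) ∧ (∀ g : G, c 1 g = 0))
    (hc_hom : ∀ (g : G) (n m : ℕ), c (g ^ n) (g ^ m) = 0) :
    -- (1)
    (∀ γ₁ γ₂ : Γ,
      f (σ γ₁) (σ γ₂) = Ψ (σ γ₁) ((h γ₂)⁻¹) * (h γ₁)⁻¹ * h (γ₁ * γ₂)) ∧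
    -- (2)
    (∀ γ₁ γ₂ γ₃ : Γ,
      eCochain Ψ f c (σ γ₁) (σ γ₂) (σ γ₃) =
        Tcochain σ f Ψ h (fun g g' => c (Ψ (σ γ₁) g) (Ψ (σ γ₁) g')) γ₂ γ₃
          - Tcochain σ f Ψ h c (γ₁ * γ₂) γ₃
          + Tcochain σ f Ψ h c γ₁ (γ₂ * γ₃)
          - Tcochain σ f Ψ h c γ₁ γ₂) :=
  stmt_19_general i σ hi_inj s f hf Ψ hΨ h hh c hc_bdd hc_cocycle hc_norm hc_hom
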